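/- The Golden exponential function is an eigenfunction of the Golden derivative: for all real numbers k and all real x ≠ 0, (e_F(kφx) − e_F(−kx/φ)) / ((φ + 1/φ)·x) = k · e_F(kx), where e_F(t) = ∑_{n=0}^∞ t^n/F_n! and φ = (1+√5)/2. -/

import Mathlib

/-! Binet's formula `φⁿ - ψⁿ = √5 Fₙ`, with `ψ = -1/φ`, turns `e_F(tφ) - e_F(tψ)` into
`√5 ∑ Fₙ tⁿ / Fₙ!`, and since `Fₙ! = Fₙ₋₁! Fₙ` this last series is `t e_F(t)`. -/

/-- The fibofactorial: `F_n! = F_1 * F_2 * ... * F_n`, with `F_0! = 1`. -/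
def fibFact (n : ℕ) : ℕ := ∏ i ∈ Finset.range n, Nat.fib (i + 1)

/-- The golden ratio `φ = (1 + √5)/2`. -/
noncomputable def phi : ℝ := (1 + Real.sqrt 5) / 2

/-- The Golden exponential function `e_F(t) = ∑ t^n / F_n!`. -/
noncomputable def eF (t : ℝ) : ℝ := ∑' n : ℕ, t ^ n / (fibFact n : ℝ)

open Filter Topology Real

lemma fibFact_succ (n : ℕ) : fibFact (n + 1) = fibFact n * Nat.fib (n + 1) :=
  Finset.prod_range_succ _ _

lemma pow_succ_div_fibFact_succ (t : ℝ) (n : ℕ) :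
    t ^ (n + 1) / fibFact (n + 1) = t / Nat.fib (n + 1) * (t ^ n / fibFact n) := by
  rw [fibFact_succ, Nat.cast_mul, pow_succ]
  ring

lemma tendsto_fib_atTop : Tendsto Nat.fib atTop atTop :=
  tendsto_atTop_mono' _ ((eventually_ge_atTop 5).mono fun _ => Nat.le_fib_self) tendsto_id

lemma summable_eF (t : ℝ) : Summable fun n : ℕ => t ^ n / (fibFact n : ℝ) := by
  have hratio : Tendsto (fun n : ℕ => |t| / Nat.fib (n + 1)) atTop (𝓝 0) :=
    tendsto_const_nhds.div_atTop <| tendsto_natCast_atTop_atTop.comp <|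
      tendsto_fib_atTop.comp (tendsto_add_atTop_nat 1)
  refine summable_of_ratio_norm_eventually_le (r := 1 / 2) (by norm_num) ?_
  filter_upwards [hratio.eventually (ge_mem_nhds (by norm_num : (0 : ℝ) < 1 / 2))] with n hn
  rw [pow_succ_div_fibFact_succ, norm_mul, norm_div, norm_natCast, Real.norm_eq_abs]
  exact mul_le_mul_of_nonneg_right hn (norm_nonneg _)

lemma hasSum_pow_mul_fib_div_fibFact (t : ℝ) :
    HasSum (fun n : ℕ => t ^ n * Nat.fib n / (fibFact n : ℝ)) (t * eF t) := by
  rw [← hasSum_nat_add_iff' 1]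
  have hterm (n : ℕ) : t ^ (n + 1) * Nat.fib (n + 1) / (fibFact (n + 1) : ℝ)
      = t * (t ^ n / fibFact n) := by
    have hfib : (Nat.fib (n + 1) : ℝ) ≠ 0 := by exact_mod_cast (Nat.fib_pos.2 n.succ_pos).ne'
    rw [mul_div_right_comm, pow_succ_div_fibFact_succ]
    field_simp
  simpa [hterm, eF] using (summable_eF t).hasSum.mul_left t

lemma eF_mul_goldenRatio_sub_eF_mul_goldenConj (t : ℝ) :
    eF (t * goldenRatio) - eF (t * goldenConj) = √5 * (t * eF t) := by
  have hbinet (n : ℕ) : (t * goldenRatio) ^ n / (fibFact n : ℝ) - (t * goldenConj) ^ n / fibFact n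
      = √5 * (t ^ n * Nat.fib n / fibFact n) := by
    rw [coe_fib_eq, mul_pow, mul_pow]
    field_simp
  rw [eF, eF, ← (summable_eF _).tsum_sub (summable_eF _)]
  simp only [hbinet]
  rw [tsum_mul_left, (hasSum_pow_mul_fib_div_fibFact t).tsum_eq]

/-- The Golden exponential is an eigenfunction of the Golden derivative:
for all real `k` and all `x ≠ 0`, `D_F (e_F(k·)) (x) = k * e_F(kx)`. -/
theorem goldenExp_eigenfunction (k x : ℝ) (hx : x ≠ 0) :
    (eF (k * (phi * x)) - eF (-(k * x / phi))) / ((phi + 1 / phi) * x) = k * eF (k * x) := by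
  have hphi : phi = goldenRatio := rfl
  have hconj : -(1 / goldenRatio) = goldenConj := by rw [one_div, inv_goldenRatio]; ring
  have harg₁ : k * (phi * x) = k * x * goldenRatio := by rw [hphi]; ring
  have harg₂ : -(k * x / phi) = k * x * goldenConj := by rw [hphi, ← hconj]; ring
  have hden : phi + 1 / phi = √5 := by
    rw [hphi, ← goldenRatio_sub_goldenConj, ← hconj, sub_neg_eq_add]
  rw [harg₁, harg₂, hden, eF_mul_goldenRatio_sub_eF_mul_goldenConj]
  field_simp
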